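/- There exist normalised 2-head Büchi transducers 𝒯 and 𝒯' with R(𝒯) ⊆ R(𝒯') (in fact R(𝒯) = R(𝒯')) such that Spoiler wins the two-buffer simulation game 𝒯 vs 𝒯' for all buffer capacities (k1,k2) ∈ (ℕ ∪ {ω})²; i.e., two-buffer simulation is an incomplete approximation of relation inclusion. -/

import Mathlib

/-!
The witnesses only write output letters. `𝒯` reads `b^ω` and `b^* c^ω` deterministically
(`s0 →b s0`, `s0 →c s1`, `s1 →c s1`, all states accepting), whereas `𝒯'` has to guess, while
still reading `b`s, whether a `c` will ever come: it either jumps into the accepting `b`-loop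
`t1` or waits in the non-accepting `t0` for the `c`-loop `t2`.

Spoiler plays `b` until Duplicator's run first visits an accepting state, which it has to do
to win, and `c` from then on. All letters go to the second buffer, and no `c` is in it before
the switch, so at the switch Duplicator is in `t1`, where she can never read a `c`. She
therefore consumes at most the `b`s pushed before the switch, whereas Spoiler's run is
accepting and pushes infinitely many letters.
-/

open scoped Classical

/-- A Büchi automaton over alphabet `S`. -/
structure BA (S : Type) where
  Q : Type
  init : Q
  trans : Q → S → Q → Prop
  acc : Q → Prop

/-- The Büchi language of `A`: infinite words with a run from the initial state
visiting accepting states infinitely often. -/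
def BA.Lang {S : Type} (A : BA S) : Set (ℕ → S) :=
  { w | ∃ ρ : ℕ → A.Q, ρ 0 = A.init ∧ (∀ n, A.trans (ρ n) (w n) (ρ (n+1))) ∧
        ∀ n, ∃ m, n ≤ m ∧ A.acc (ρ m) }

/-- A configuration of the two-buffer simulation game: Spoiler's state, contents of
the two FIFO buffers (head = oldest letter), Duplicator's state. -/
structure Cfg {S : Type} (A B : BA S) where
  qa : A.Q
  b1 : List S
  b2 : List S
  qb : B.Q

/-- The configuration after Spoiler's move `m = (a, q')`: his state becomes `q'` and
the letter `a` is appended to buffer `σ a` (`true` = buffer 1, `false` = buffer 2). -/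
def midCfg {S : Type} {A B : BA S} (σ : S → Bool) (c : Cfg A B) (m : S × A.Q) : Cfg A B :=
  ⟨m.2, if σ m.1 then c.b1 ++ [m.1] else c.b1, if σ m.1 then c.b2 else c.b2 ++ [m.1], c.qb⟩

/-- Applying a finite sequence of Duplicator consumption steps: each step picks a buffer
(`true` = buffer 1) and a successor state, consuming the oldest letter of that buffer
along a matching transition of `B`.  Returns `none` if some step is illegal. -/
noncomputable def dupApply {S : Type} (A B : BA S) :
    Cfg A B → List (Bool × B.Q) → Option (Cfg A B)
  | c, [] => some c
  | c, (j, p') :: ms =>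
    if j then
      match c.b1 with
      | [] => none
      | b :: β => if B.trans c.qb b p' then dupApply A B ⟨c.qa, β, c.b2, p'⟩ ms else none
    else
      match c.b2 with
      | [] => none
      | b :: β => if B.trans c.qb b p' then dupApply A B ⟨c.qa, c.b1, β, p'⟩ ms else none

/-- The configuration at the start of round `n` (i.e. after Duplicator's moves of
round `n-1`), given Spoiler's moves `sp` and Duplicator's responses `dm`;
`none` once an illegal move has occurred. -/
noncomputable def playCfg {S : Type} (A B : BA S) (σ : S → Bool)
    (sp : ℕ → S × A.Q) (dm : ℕ → List (Bool × B.Q)) : ℕ → Option (Cfg A B)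
  | 0 => some ⟨A.init, [], [], B.init⟩
  | n+1 =>
    match playCfg A B σ sp dm n with
    | none => none
    | some c =>
      if A.trans c.qa (sp n).1 (sp n).2 then dupApply A B (midCfg σ c (sp n)) (dm n) else none

/-- Number of letters put into buffer `j` by Spoiler during the first `n` rounds. -/
noncomputable def pushed {S : Type} {QA : Type} (σ : S → Bool) (sp : ℕ → S × QA)
    (j : Bool) (n : ℕ) : ℕ :=
  ((Finset.range n).filter fun i => σ (sp i).1 = j).card

/-- Number of letters consumed from buffer `j` by Duplicator during the first `n` rounds. -/
noncomputable def consumed {QB : Type} (dm : ℕ → List (Bool × QB)) (j : Bool) (n : ℕ) : ℕ :=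
  ∑ i ∈ Finset.range n, ((dm i).filter fun x => x.1 = j).length

/-- Duplicator's strategy is consistent with the moves `dm` of a play. -/
def Consistent {S : Type} (A B : BA S)
    (dstrat : List ((S × A.Q) × List (Bool × B.Q)) → (S × A.Q) → List (Bool × B.Q))
    (sp : ℕ → S × A.Q) (dm : ℕ → List (Bool × B.Q)) : Prop :=
  ∀ n, dm n = dstrat (List.ofFn fun i : Fin n => (sp i, dm i)) (sp n)

/-- Spoiler's moves are legal as long as the play is defined. -/
def SpLegal {S : Type} (A B : BA S) (σ : S → Bool)
    (sp : ℕ → S × A.Q) (dm : ℕ → List (Bool × B.Q)) : Prop :=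
  ∀ n c, playCfg A B σ sp dm n = some c → A.trans c.qa (sp n).1 (sp n).2

/-- Duplicator's winning condition for a play of the two-buffer game with
capacities `(k1, k2)`: the buffers never exceed their capacities (checked after her
moves), and either Spoiler's run visits accepting states only finitely often, or
every letter put into a buffer is eventually consumed and Duplicator's run visits
accepting states infinitely often. -/
def Win2 {S : Type} (A B : BA S) (σ : S → Bool) (k1 k2 : ℕ∞)
    (sp : ℕ → S × A.Q) (dm : ℕ → List (Bool × B.Q)) : Prop :=
  (∀ n c, playCfg A B σ sp dm n = some c →
      (c.b1.length : ℕ∞) ≤ k1 ∧ (c.b2.length : ℕ∞) ≤ k2) ∧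
  ((∃ N, ∀ n, N ≤ n → ¬ A.acc (sp n).2) ∨
    ((∀ n j, ∃ m, pushed σ sp j n ≤ consumed dm j m) ∧
     (∀ n, ∃ m, n ≤ m ∧ ∃ x ∈ dm m, B.acc x.2)))

/-- `dstrat` is a winning strategy for Duplicator in the two-buffer simulation game on
`A`, `B` with letter distribution `σ` and capacities `(k1, k2)`: against every legal
behaviour of Spoiler, all of Duplicator's prescribed moves are legal (the play never
breaks) and the resulting play is won by Duplicator. -/
def WinningStrat2 {S : Type} (A B : BA S) (σ : S → Bool) (k1 k2 : ℕ∞)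
    (dstrat : List ((S × A.Q) × List (Bool × B.Q)) → (S × A.Q) → List (Bool × B.Q)) : Prop :=
  ∀ sp dm, Consistent A B dstrat sp dm → SpLegal A B σ sp dm →
    (∀ n, (playCfg A B σ sp dm n).isSome) ∧ Win2 A B σ k1 k2 sp dm

/-- Two-buffer simulation `A ⊑(k1,k2) B`: Duplicator has a winning strategy. -/
def Sim2 {S : Type} (A B : BA S) (σ : S → Bool) (k1 k2 : ℕ∞) : Prop :=
  ∃ dstrat, WinningStrat2 A B σ k1 k2 dstrat
/-- The concatenation of the infinite sequence of finite words `g 0, g 1, g 2, …`,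
as a finite or infinite word represented by a function `ℕ → Option α`
(`iConcat g k = some a` iff the concatenation has an `k`-th letter and it is `a`). -/
noncomputable def iConcat {α : Type} (g : ℕ → List α) : ℕ → Option α := fun k =>
  if h : ∃ m, k < ((List.range m).map g).flatten.length
  then ((List.range h.choose).map g).flatten[k]?
  else none

/-- The projection of an infinite word `w` onto the letters of buffer index `j`
(i.e. onto the sub-alphabet `σ⁻¹(j)`), as a finite or infinite word. -/
noncomputable def projW {S : Type} (σ : S → Bool) (j : Bool) (w : ℕ → S) : ℕ → Option S :=
  iConcat fun n => if σ (w n) = j then [w n] else []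
/-- A 2-head Büchi transducer with input alphabet `Si` and output alphabet `So`. -/
structure Trd (Si So : Type) where
  Q : Type
  init : Q
  delta : Set (Q × List Si × List So × Q)
  acc : Q → Prop

/-- A transducer is normalised if every transition consumes exactly one letter,
either from the input or from the output alphabet. -/
def Trd.Normalised {Si So : Type} (T : Trd Si So) : Prop :=
  ∀ t ∈ T.delta, (∃ a, t.2.1 = [a] ∧ t.2.2.1 = []) ∨ (t.2.1 = [] ∧ ∃ b, t.2.2.1 = [b])

/-- The infinitary rational relation recognised by `T`: pairs of finite-or-infinite
words `(u, v)` obtained by concatenating the input parts and the output parts of an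
accepting run. -/
def Trd.Rel {Si So : Type} (T : Trd Si So) : Set ((ℕ → Option Si) × (ℕ → Option So)) :=
  { p | ∃ (ρ : ℕ → T.Q) (us : ℕ → List Si) (vs : ℕ → List So),
      ρ 0 = T.init ∧ (∀ n, (ρ n, us n, vs n, ρ (n+1)) ∈ T.delta) ∧
      (∀ n, ∃ m, n ≤ m ∧ T.acc (ρ m)) ∧ p.1 = iConcat us ∧ p.2 = iConcat vs }

/-- A (normalised) transducer viewed as a Büchi automaton over `Si ⊕ So`. -/
def Trd.toBA {Si So : Type} (T : Trd Si So) : BA (Si ⊕ So) where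
  Q := T.Q
  init := T.init
  trans := fun q x q' =>
    match x with
    | Sum.inl a => (q, [a], [], q') ∈ T.delta
    | Sum.inr b => (q, [], [b], q') ∈ T.delta
  acc := T.acc

namespace Trd

variable {Si So : Type}

def IsAcceptingRun (T : Trd Si So) (ρ : ℕ → T.Q) (us : ℕ → List Si)
    (vs : ℕ → List So) : Prop :=
  ρ 0 = T.init ∧ (∀ n, (ρ n, us n, vs n, ρ (n+1)) ∈ T.delta) ∧
    ∀ n, ∃ m, n ≤ m ∧ T.acc (ρ m)

theorem rel_subset_of_runs {T T' : Trd Si So}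
    (h : ∀ ρ us vs, T.IsAcceptingRun ρ us vs → ∃ ρ', T'.IsAcceptingRun ρ' us vs) :
    T.Rel ⊆ T'.Rel := by
  rintro ⟨u, v⟩ ⟨ρ, us, vs, h0, hδ, hacc, rfl, rfl⟩
  obtain ⟨ρ', h0', hδ', hacc'⟩ := h ρ us vs ⟨h0, hδ, hacc⟩
  exact ⟨ρ', us, vs, h0', hδ', hacc', rfl, rfl⟩

theorem rel_subset_of_hom {T T' : Trd Si So} (f : T.Q → T'.Q) (h0 : f T.init = T'.init)
    (hδ : ∀ q u v q', (q, u, v, q') ∈ T.delta → (f q, u, v, f q') ∈ T'.delta)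
    (hacc : ∀ q, T.acc q → T'.acc (f q)) :
    T.Rel ⊆ T'.Rel :=
  rel_subset_of_runs fun ρ _ _ ⟨hρ0, hρδ, hρacc⟩ =>
    ⟨f ∘ ρ, by simp [hρ0, h0], fun n => hδ _ _ _ _ (hρδ n),
      fun n => (hρacc n).imp fun _ ⟨hm, ha⟩ => ⟨hm, hacc _ ha⟩⟩

end Trd

section TwoBufferGame

variable {S : Type} {A B : BA S}

theorem dupApply_qa {l : List (Bool × B.Q)} {c c' : Cfg A B} (h : dupApply A B c l = some c') :
    c'.qa = c.qa := by
  induction l generalizing c with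
  | nil => simp only [dupApply, Option.some_inj] at h; rw [← h]
  | cons x ms ih =>
    obtain ⟨_ | _, p⟩ := x <;> simp only [dupApply, Bool.false_eq_true, ↓reduceIte] at h <;>
      split at h <;> (try split_ifs at h) <;> first | cases h | exact (ih h).trans rfl

variable {σ : S → Bool} {sp : ℕ → S × A.Q} {dm : ℕ → List (Bool × B.Q)}

theorem playCfg_succ_eq_some {n : ℕ} {c' : Cfg A B} :
    playCfg A B σ sp dm (n+1) = some c' ↔ ∃ c, playCfg A B σ sp dm n = some c ∧
      A.trans c.qa (sp n).1 (sp n).2 ∧ dupApply A B (midCfg σ c (sp n)) (dm n) = some c' := by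
  rw [playCfg]
  split <;> simp_all

theorem playCfg_succ_qa {n : ℕ} {c : Cfg A B} (h : playCfg A B σ sp dm (n+1) = some c) :
    c.qa = (sp n).2 := by
  obtain ⟨_, -, -, hd⟩ := playCfg_succ_eq_some.1 h
  exact dupApply_qa hd

theorem consumed_succ (j : Bool) (n : ℕ) :
    consumed dm j (n + 1) = consumed dm j n + ((dm n).filter fun x => x.1 = j).length :=
  Finset.sum_range_succ _ n

theorem pushed_eq_self {j : Bool} (h : ∀ i, σ (sp i).1 = j) (n : ℕ) :
    pushed σ sp j n = n := by
  simp [pushed, h]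

variable (A B)

abbrev GameHistory := List ((S × A.Q) × List (Bool × B.Q))

def playHistory (spoiler : GameHistory A B → S × A.Q)
    (dstrat : GameHistory A B → S × A.Q → List (Bool × B.Q)) : ℕ → GameHistory A B
  | 0 => []
  | n+1 =>
    let h := playHistory spoiler dstrat n
    h ++ [(spoiler h, dstrat h (spoiler h))]

variable (spoiler : GameHistory A B → S × A.Q)
  (dstrat : GameHistory A B → S × A.Q → List (Bool × B.Q))

def playSp (n : ℕ) : S × A.Q := spoiler (playHistory A B spoiler dstrat n)

def playDm (n : ℕ) : List (Bool × B.Q) :=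
  dstrat (playHistory A B spoiler dstrat n) (playSp A B spoiler dstrat n)

theorem playHistory_eq_ofFn (n : ℕ) : playHistory A B spoiler dstrat n =
    List.ofFn fun i : Fin n => (playSp A B spoiler dstrat i, playDm A B spoiler dstrat i) := by
  induction n with
  | zero => rfl
  | succ n ih =>
    simp only [List.ofFn_succ_last, Fin.val_castSucc, Fin.val_last, ← ih]
    rfl

theorem consistent_play :
    Consistent A B dstrat (playSp A B spoiler dstrat) (playDm A B spoiler dstrat) := fun n => by
  rw [← playHistory_eq_ofFn]; rfl

end TwoBufferGame

namespace Sim2Counterexample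

open List (replicate)

inductive QA | s0 | s1

inductive QB | t0 | t1 | t2

theorem QB.eq_t1_of_ne {q : QB} (h0 : q ≠ .t0) (h2 : q ≠ .t2) : q = .t1 := by
  cases q <;> simp_all

abbrev T : Trd Unit Bool where
  Q := QA
  init := .s0
  delta := {(.s0, [], [true], .s0), (.s0, [], [false], .s1), (.s1, [], [false], .s1)}
  acc _ := True

abbrev T' : Trd Unit Bool where
  Q := QB
  init := .t0
  delta := {(.t0, [], [true], .t0), (.t0, [], [true], .t1), (.t1, [], [true], .t1),
            (.t0, [], [false], .t2), (.t2, [], [false], .t2)}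
  acc q := q ≠ .t0

theorem T_normalised : T.Normalised := by
  rintro _ (rfl | rfl | rfl) <;> simp

theorem T'_normalised : T'.Normalised := by
  rintro _ (rfl | rfl | rfl | rfl | rfl) <;> simp

theorem rel_T'_subset : T'.Rel ⊆ T.Rel :=
  Trd.rel_subset_of_hom (fun | .t2 => .s1 | _ => .s0) rfl
    (by rintro q u v q' (h | h | h | h | h) <;> cases h <;> simp) fun _ _ => trivial

theorem T_run_s1_of_le {ρ : ℕ → QA} {us : ℕ → List Unit} {vs : ℕ → List Bool}
    (hρ : ∀ n, (ρ n, us n, vs n, ρ (n+1)) ∈ T.delta) {m n : ℕ} (hm : ρ m = .s1)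
    (hmn : m ≤ n) :
    ρ n = .s1 := by
  induction n, hmn using Nat.le_induction with
  | base => exact hm
  | succ n _ ih => rcases hρ n with h | h | h <;> simp_all

theorem rel_T_subset : T.Rel ⊆ T'.Rel := by
  refine Trd.rel_subset_of_runs fun ρ us vs ⟨hρ0, hρ, _⟩ => ?_
  by_cases hs1 : ∃ m, ρ m = .s1
  · obtain ⟨m, hm⟩ := hs1
    refine ⟨fun n => if ρ n = .s1 then .t2 else .t0, by simp [hρ0], fun n => ?_, fun n => ?_⟩
    · rcases hρ n with h | h | h <;> simp_all
    · exact ⟨max n m, le_max_left n m, by simp [T_run_s1_of_le hρ hm (le_max_right n m)]⟩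
  · push Not at hs1
    refine ⟨fun n => if n = 0 then .t0 else .t1, rfl, fun n => ?_,
      fun n => ⟨n + 1, by simp⟩⟩
    rcases hρ n with h | h | h <;> cases n <;> simp_all

theorem rel_eq : T.Rel = T'.Rel := rel_T_subset.antisymm rel_T'_subset

def bl : Unit ⊕ Bool := .inr true

def cl : Unit ⊕ Bool := .inr false

theorem T_trans_bl : T.toBA.trans .s0 bl .s0 := Or.inl rfl

theorem T_trans_cl : ∀ q : QA, T.toBA.trans q cl .s1
  | .s0 => Or.inr (Or.inl rfl)
  | .s1 => Or.inr (Or.inr rfl)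

theorem T'_trans_bl {q p : QB} (h : T'.toBA.trans q bl p) :
    p ≠ .t2 ∧ (q = .t1 → p = .t1) := by
  change (q, [], [true], p) ∈ T'.delta at h
  rcases h with h | h | h | h | h <;> simp_all

theorem T'_not_trans_t1_cl {p : QB} : ¬ T'.toBA.trans .t1 cl p := by
  rintro (h | h | h | h | h) <;> simp_all

-- The invariant of every play against `spoiler`: a `c` is waiting only once Duplicator is
-- trapped in `t1`, where no `c` can be read.
def Shape (p q : ℕ) (c : Cfg T.toBA T'.toBA) : Prop :=
  c.b1 = [] ∧ c.b2 = replicate p bl ++ replicate q cl ∧ c.qb ≠ .t2 ∧ (0 < q → c.qb = .t1)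

theorem Shape.dupApply {l : List (Bool × T'.toBA.Q)} {p q : ℕ} {c c' : Cfg T.toBA T'.toBA}
    (hc : Shape p q c) (h : dupApply T.toBA T'.toBA c l = some c') :
    ∃ p', (l.filter fun x => x.1 = false).length + p' = p ∧ Shape p' q c' ∧
      (c.qb = .t1 ∨ (∃ x ∈ l, T'.acc x.2) → c'.qb = .t1) := by
  induction l generalizing p c with
  | nil =>
    simp only [_root_.dupApply, Option.some_inj] at h
    subst h
    exact ⟨p, by simp, hc, by simp⟩
  | cons x ms ih =>
    obtain ⟨qa, b1, b2, qb⟩ := c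
    obtain ⟨rfl, rfl, hqb, hq⟩ := hc
    dsimp only at hqb hq ⊢
    obtain ⟨_ | _, p'⟩ := x
    · rcases p with _ | p
      · rcases q with _ | q
        · simp [_root_.dupApply] at h
        · simp only [_root_.dupApply, Bool.false_eq_true, ↓reduceIte, List.replicate_zero,
            List.nil_append, List.replicate_succ, hq q.succ_pos] at h
          split_ifs at h with htr
          exact absurd htr T'_not_trans_t1_cl
      simp only [_root_.dupApply, Bool.false_eq_true, ↓reduceIte, List.replicate_succ,
        List.cons_append] at h
      split_ifs at h with htr
      obtain ⟨hne, ht1⟩ := T'_trans_bl htr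
      obtain ⟨p'', hcount, hshape, hreach⟩ := ih ⟨rfl, rfl, hne, fun hq0 => ht1 (hq hq0)⟩ h
      refine ⟨p'', by rw [List.filter_cons_of_pos rfl, List.length_cons]; omega, hshape, ?_⟩
      rintro (hqb1 | ⟨y, hy, hyacc⟩)
      · exact hreach (Or.inl (ht1 hqb1))
      rcases List.mem_cons.1 hy with rfl | hy
      · exact hreach (Or.inl (QB.eq_t1_of_ne hyacc hne))
      · exact hreach (Or.inr ⟨y, hy, hyacc⟩)
    · simp [_root_.dupApply] at h

theorem Shape.midCfg_bl {p : ℕ} {c : Cfg T.toBA T'.toBA} (hc : Shape p 0 c) (s : QA) :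
    Shape (p + 1) 0 (midCfg (fun x => x.isLeft) c (bl, s)) := by
  obtain ⟨hb1, hb2, hqb, -⟩ := hc
  refine ⟨hb1, ?_, hqb, by simp⟩
  simp [midCfg, bl, hb2, List.replicate_succ']

theorem Shape.midCfg_cl {p q : ℕ} {c : Cfg T.toBA T'.toBA} (hc : Shape p q c) (hqb : c.qb = .t1)
    (s : QA) : Shape p (q + 1) (midCfg (fun x => x.isLeft) c (cl, s)) := by
  obtain ⟨hb1, hb2, hqb2, -⟩ := hc
  refine ⟨hb1, ?_, hqb2, fun _ => hqb⟩
  simp [midCfg, cl, hb2, List.replicate_succ']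

def Committed (h : GameHistory T.toBA T'.toBA) : Prop := ∃ r ∈ h, ∃ x ∈ r.2, T'.acc x.2

noncomputable def spoiler (h : GameHistory T.toBA T'.toBA) : (Unit ⊕ Bool) × T.toBA.Q :=
  if Committed h then (cl, .s1) else (bl, .s0)

section Play

variable
  (ds : GameHistory T.toBA T'.toBA → (Unit ⊕ Bool) × T.toBA.Q → List (Bool × T'.toBA.Q))

local notation "hist" => playHistory T.toBA T'.toBA spoiler ds
local notation "sp" => playSp T.toBA T'.toBA spoiler ds
local notation "dm" => playDm T.toBA T'.toBA spoiler ds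

theorem committed_succ (n : ℕ) :
    Committed (hist (n + 1)) ↔ Committed (hist n) ∨ ∃ x ∈ dm n, T'.acc x.2 := by
  simp [Committed, playHistory, playDm, playSp, or_and_right, exists_or]

theorem monotone_committed : Monotone fun n => Committed (hist n) :=
  monotone_nat_of_le_succ fun n h => (committed_succ ds n).2 (Or.inl h)

theorem playSp_spoiler (n : ℕ) : sp n = if Committed (hist n) then (cl, .s1) else (bl, .s0) :=
  rfl

theorem spLegal_spoiler : SpLegal T.toBA T'.toBA (fun x => x.isLeft) sp dm := by
  intro n c hc
  rw [playSp_spoiler]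
  split_ifs with hn
  · exact T_trans_cl c.qa
  · have hqa : c.qa = .s0 := by
      cases n with
      | zero => simp only [playCfg, Option.some_inj] at hc; rw [← hc]; rfl
      | succ m =>
        rw [playCfg_succ_qa hc, playSp_spoiler,
          if_neg fun h => hn (monotone_committed ds m.le_succ h)]
    exact hqa ▸ T_trans_bl

theorem shape_playCfg {n0 : ℕ} (hn0 : ∀ n, Committed (hist n) ↔ n0 ≤ n) (n : ℕ)
    {c : Cfg T.toBA T'.toBA} (hc : playCfg T.toBA T'.toBA (fun x => x.isLeft) sp dm n = some c) :
    ∃ p, consumed dm false n + p = min n n0 ∧ Shape p (n - n0) c ∧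
      (n0 ≤ n → c.qb = .t1) := by
  induction n generalizing c with
  | zero =>
    simp only [playCfg, Option.some_inj] at hc
    subst hc
    have : ¬ n0 ≤ 0 := fun h => by simpa [Committed, playHistory] using (hn0 0).2 h
    exact ⟨0, by simp [consumed], ⟨rfl, by simp, nofun, by simp⟩, fun h => absurd h this⟩
  | succ n ih =>
    obtain ⟨c0, hc0, -, hd⟩ := playCfg_succ_eq_some.1 hc
    obtain ⟨p, hp, hshape, ht1⟩ := ih hc0
    rw [playSp_spoiler] at hd
    by_cases hn : n0 ≤ n
    · rw [if_pos ((hn0 n).2 hn)] at hd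
      obtain ⟨p', hk, hshape', hreach⟩ := (hshape.midCfg_cl (ht1 hn) .s1).dupApply hd
      refine ⟨p', by rw [consumed_succ]; omega, ?_, fun _ => hreach (Or.inl (ht1 hn))⟩
      rwa [show n + 1 - n0 = n - n0 + 1 by omega]
    · rw [if_neg (mt (hn0 n).1 hn)] at hd
      rw [show n - n0 = 0 by omega] at hshape
      obtain ⟨p', hk, hshape', hreach⟩ := (hshape.midCfg_bl .s0).dupApply hd
      refine ⟨p', by rw [consumed_succ]; omega, by rwa [show n + 1 - n0 = 0 by omega], ?_⟩
      intro hn1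
      have := (committed_succ ds n).1 ((hn0 _).2 hn1)
      exact hreach (Or.inr (this.resolve_left (mt (hn0 n).1 hn)))

theorem exists_committed_iff_le (h : ∃ m, ∃ x ∈ dm m, T'.acc x.2) :
    ∃ n0, ∀ n, Committed (hist n) ↔ n0 ≤ n := by
  obtain ⟨m, x, hx, hxacc⟩ := h
  have hcommit : ∃ n, Committed (hist n) :=
    ⟨m + 1, (committed_succ ds m).2 (Or.inr ⟨x, hx, hxacc⟩)⟩
  exact ⟨Nat.find hcommit, fun n =>
    ⟨Nat.find_min' hcommit, fun h => monotone_committed ds h (Nat.find_spec hcommit)⟩⟩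

theorem pushed_playSp (n : ℕ) : pushed (fun x => x.isLeft) sp false n = n :=
  pushed_eq_self (fun i => by rw [playSp_spoiler]; split_ifs <;> rfl) n

end Play

theorem not_sim2 (k1 k2 : ℕ∞) : ¬ Sim2 T.toBA T'.toBA (fun x => x.isLeft) k1 k2 := by
  rintro ⟨ds, hds⟩
  obtain ⟨hsome, -, ⟨N, hN⟩ | ⟨hconsume, hacc⟩⟩ :=
    hds _ _ (consistent_play _ _ spoiler ds) (spLegal_spoiler ds)
  · exact hN N le_rfl trivial
  obtain ⟨n0, hn0⟩ := exists_committed_iff_le ds ((hacc 0).imp fun _ => And.right)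
  obtain ⟨m, hm⟩ := hconsume (n0 + 1) false
  obtain ⟨c, hc⟩ := Option.isSome_iff_exists.mp (hsome m)
  obtain ⟨p, hp, -⟩ := shape_playCfg ds hn0 m hc
  rw [pushed_playSp] at hm
  omega

end Sim2Counterexample

/-- There are normalised 2-head Büchi transducers `𝒯`, `𝒯'` with
`R(𝒯) = R(𝒯')` (so in particular `R(𝒯) ⊆ R(𝒯')`) such that Spoiler wins the
two-buffer simulation game on `𝒯`, `𝒯'` for all buffer capacities: two-buffer
simulation is an incomplete approximation of relation inclusion. -/
theorem sim2_incomplete_for_relation_inclusion :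
    ∃ (T T' : Trd Unit Bool),
      T.Normalised ∧ T'.Normalised ∧ T.Rel = T'.Rel ∧
      ∀ k1 k2 : ℕ∞, ¬ Sim2 T.toBA T'.toBA (fun x => x.isLeft) k1 k2 :=
  ⟨_, _, Sim2Counterexample.T_normalised, Sim2Counterexample.T'_normalised,
    Sim2Counterexample.rel_eq, Sim2Counterexample.not_sim2⟩
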